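/- arXiv:2203.09319 — 6 statements merged into one kernel-verified Lean document; each statement's English description precedes it below -/
import Mathlib

section
/- Let 1 < p < q be relatively prime integers. Then the rational function (t^{pq}-1)(t-1)/((t^p-1)(t^q-1)) is a polynomial in t of the form \sum_{i=0}^{2n}(-1)^i t^{a_i} for some nonnegative integer n and a strictly decreasing sequence of nonnegative integers a_0 > a_1 > ... > a_{2n} with a_0 = (p-1)(q-1) and a_{2n} = 0. -/
/-!
Let `S ⊆ ℕ` be the additive monoid generated by `p` and `q`, and `H = ∑_{k ∈ S} t^k`.
By coprimality every element of `S` is uniquely `i p + j q` with `j < p`, so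
`H (1 - t^p) = ∑_{j < p} t^{qj}` and `H (1 - t^p)(1 - t^q) = 1 - t^{pq}`: the Alexander polynomial
is `(1 - t) H`. Its coefficient of `t^k` is `[k ∈ S] - [k - 1 ∈ S]`, a jump of a `0/1`-valued
sequence, so the nonzero coefficients alternate `+1, -1, …`, beginning with `+1` at `0 ∈ S`.
Since `(p - 1)(q - 1) - 1` is the Frobenius number of `S`, the last jump is an upward one at
`(p - 1)(q - 1)`, after which all coefficients vanish.
-/

open Polynomial

lemma PowerSeries.coeff_zero_one_sub_X_mul {R : Type*} [Ring R] (φ : PowerSeries R) :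
    coeff 0 ((1 - X) * φ) = coeff 0 φ := by
  rw [sub_mul, one_mul, map_sub, coeff_zero_X_mul, sub_zero]

lemma PowerSeries.coeff_succ_one_sub_X_mul {R : Type*} [Ring R] (φ : PowerSeries R) (k : ℕ) :
    coeff (k + 1) ((1 - X) * φ) = coeff (k + 1) φ - coeff k φ := by
  rw [sub_mul, one_mul, map_sub, coeff_succ_X_mul]

lemma PowerSeries.coe_trunc_of_coeff_eq_zero {R : Type*} [CommSemiring R] {n : ℕ}
    {φ : PowerSeries R} (h : ∀ m ≥ n, coeff m φ = 0) : (trunc n φ : PowerSeries R) = φ := by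
  ext m
  rw [Polynomial.coeff_coe, coeff_trunc]
  split_ifs with hm
  · rfl
  · exact (h m (not_lt.1 hm)).symm

lemma update_lt_update_of_lt {b : ℕ → ℕ} {m M : ℕ} (hb : ∀ i j, i < j → j < m → b i < b j)
    (hbM : ∀ i < m, b i < M) {i j : ℕ} (hij : i < j) (hj : j < m + 1) :
    Function.update b m M i < Function.update b m M j := by
  rw [Function.update_of_ne (by omega)]
  rcases (Nat.lt_succ_iff.1 hj).lt_or_eq with hj | rfl
  · rw [Function.update_of_ne hj.ne]
    exact hb i j hij hj
  · rw [Function.update_self]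
    exact hbM i hij

noncomputable def indicatorSeries (S : Set ℕ) : PowerSeries ℤ := PowerSeries.mk (S.indicator 1)

section IndicatorSeries

variable {S : Set ℕ}

lemma coeff_indicatorSeries_of_mem {k : ℕ} (h : k ∈ S) :
    PowerSeries.coeff k (indicatorSeries S) = 1 := by
  rw [indicatorSeries, PowerSeries.coeff_mk, Set.indicator_of_mem h, Pi.one_apply]

lemma coeff_indicatorSeries_of_notMem {k : ℕ} (h : k ∉ S) :
    PowerSeries.coeff k (indicatorSeries S) = 0 := by
  rw [indicatorSeries, PowerSeries.coeff_mk, Set.indicator_of_notMem h]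

lemma coeff_succ_indicatorSeries_sub_coeff {N m : ℕ} (hodd : Odd m ↔ N ∈ S)
    (hjump : ¬(N + 1 ∈ S ↔ N ∈ S)) :
    PowerSeries.coeff (N + 1) (indicatorSeries S) - PowerSeries.coeff N (indicatorSeries S) =
      (-1) ^ m := by
  by_cases h : N ∈ S
  · rw [coeff_indicatorSeries_of_mem h, coeff_indicatorSeries_of_notMem (by tauto),
      (hodd.2 h).neg_one_pow, zero_sub]
  · rw [coeff_indicatorSeries_of_mem (by tauto), coeff_indicatorSeries_of_notMem h,
      (Nat.not_odd_iff_even.1 (hodd.not.2 h)).neg_one_pow, sub_zero]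

/-- `b 0 < b 1 < ⋯ < b (m - 1)` are the positions `k ≤ N` where the indicator of `S` jumps. -/
theorem exists_trunc_eq_alternating_sum (h0 : 0 ∈ S) (N : ℕ) :
    ∃ (m : ℕ) (b : ℕ → ℕ), 0 < m ∧ (∀ i j, i < j → j < m → b i < b j) ∧ b 0 = 0 ∧
      (∀ i < m, b i ≤ N) ∧ (Odd m ↔ N ∈ S) ∧ (N ∈ S → N - 1 ∉ S → b (m - 1) = N) ∧
      PowerSeries.trunc (N + 1) ((1 - PowerSeries.X) * indicatorSeries S) =
        ∑ i ∈ Finset.range m, (-1 : ℤ[X]) ^ i * X ^ b i := by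
  induction N with
  | zero =>
    refine ⟨1, fun _ => 0, one_pos, by omega, rfl, fun _ _ => le_rfl, by simpa using h0,
      fun _ _ => rfl, ?_⟩
    rw [PowerSeries.trunc_succ, PowerSeries.trunc_zero', PowerSeries.coeff_zero_one_sub_X_mul,
      coeff_indicatorSeries_of_mem h0]
    simp
  | succ N ih =>
    obtain ⟨m, b, hm, hb, hb0, hbN, hodd, -, hsum⟩ := ih
    rw [PowerSeries.trunc_succ, hsum, PowerSeries.coeff_succ_one_sub_X_mul,
      ← C_mul_X_pow_eq_monomial]
    by_cases hflat : N + 1 ∈ S ↔ N ∈ S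
    · refine ⟨m, b, hm, hb, hb0, fun i hi => (hbN i hi).trans N.le_succ, hodd.trans hflat.symm,
        fun h h' => absurd (hflat.1 h) h', ?_⟩
      have hcoeff : PowerSeries.coeff (N + 1) (indicatorSeries S) =
          PowerSeries.coeff N (indicatorSeries S) := by
        by_cases h : N ∈ S
        · rw [coeff_indicatorSeries_of_mem h, coeff_indicatorSeries_of_mem (hflat.2 h)]
        · rw [coeff_indicatorSeries_of_notMem h, coeff_indicatorSeries_of_notMem (hflat.not.2 h)]
      rw [hcoeff, sub_self, map_zero, zero_mul, add_zero]
    · refine ⟨m + 1, Function.update b m (N + 1), m.succ_pos,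
        fun i j => update_lt_update_of_lt hb fun i hi => Nat.lt_succ_of_le (hbN i hi),
        by rwa [Function.update_of_ne hm.ne], fun i hi => ?_, by rw [Nat.odd_add_one, hodd]; tauto,
        fun _ _ => by rw [Nat.add_sub_cancel, Function.update_self], ?_⟩
      · rcases (Nat.lt_succ_iff.1 hi).lt_or_eq with hi | rfl
        · rw [Function.update_of_ne hi.ne]
          exact (hbN i hi).trans N.le_succ
        · rw [Function.update_self]
      · rw [Finset.sum_range_succ, Function.update_self,
          coeff_succ_indicatorSeries_sub_coeff hodd hflat, map_pow, map_neg, map_one]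
        congr 1
        exact Finset.sum_congr rfl fun i hi => by
          rw [Function.update_of_ne (Finset.mem_range.1 hi).ne]

theorem exists_trunc_eq_alternating_sum_of_sub_one_notMem (h0 : 0 ∈ S) {N : ℕ} (hN : N ∈ S)
    (hN1 : N - 1 ∉ S) :
    ∃ (n : ℕ) (a : ℕ → ℕ), (∀ i j, i < j → j ≤ 2 * n → a j < a i) ∧ a 0 = N ∧ a (2 * n) = 0 ∧
      PowerSeries.trunc (N + 1) ((1 - PowerSeries.X) * indicatorSeries S) =
        ∑ i ∈ Finset.range (2 * n + 1), (-1 : ℤ[X]) ^ i * X ^ a i := by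
  obtain ⟨m, b, -, hb, hb0, -, hodd, htop, hsum⟩ := exists_trunc_eq_alternating_sum h0 N
  obtain ⟨n, rfl⟩ := hodd.2 hN
  refine ⟨n, fun i => b (2 * n - i), fun i j hij hj => hb _ _ (by omega) (by omega), ?_, ?_, ?_⟩
  · simpa using htop hN hN1
  · simpa using hb0
  · rw [hsum, ← Finset.sum_range_reflect]
    refine Finset.sum_congr rfl fun i hi => ?_
    have hi : i ≤ 2 * n := Nat.lt_succ_iff.1 (Finset.mem_range.1 hi)
    have hsign : (-1 : ℤ[X]) ^ (2 * n - i) = (-1) ^ i :=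
      neg_one_pow_congr (by rw [Nat.even_sub hi]; simp)
    rw [Nat.add_sub_cancel, hsign]

end IndicatorSeries

section ClosurePair

variable {p q : ℕ}

/-- Together with `mul_sub_notMem_closure_pair`: the elements `s ∈ ⟨p, q⟩` with `s - p ∉ ⟨p, q⟩`
(the Apéry set of `⟨p, q⟩` with respect to `p`) are exactly the `q j` with `j < p`. -/
lemma mem_closure_pair_iff_exists_mul_or_sub_mem (hq : 0 < q) {k : ℕ} :
    k ∈ AddSubmonoid.closure ({p, q} : Set ℕ) ↔
      (∃ j < p, q * j = k) ∨ (p ≤ k ∧ k - p ∈ AddSubmonoid.closure ({p, q} : Set ℕ)) := by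
  obtain ⟨q, rfl⟩ : ∃ r, q = r + 1 := ⟨q - 1, by omega⟩
  simp only [AddSubmonoid.mem_closure_pair, smul_eq_mul]
  constructor
  · rintro ⟨i, j, rfl⟩
    rcases i with _ | i
    · rcases lt_or_ge j p with hj | hj
      · exact Or.inl ⟨j, hj, by ring⟩
      · obtain ⟨j, rfl⟩ := Nat.exists_eq_add_of_le hj
        exact Or.inr ⟨by nlinarith, q, j, Nat.eq_sub_of_add_eq (by ring)⟩
    · exact Or.inr ⟨by nlinarith, i, j, Nat.eq_sub_of_add_eq (by ring)⟩
  · rintro (⟨j, -, rfl⟩ | ⟨hpk, i, j, h⟩)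
    · exact ⟨0, j, by ring⟩
    · exact ⟨i + 1, j, by rw [add_mul, one_mul, add_right_comm, h, Nat.sub_add_cancel hpk]⟩

lemma mul_sub_notMem_closure_pair (hco : p.Coprime q) {j : ℕ} (hj : j < p) (hpj : p ≤ q * j) :
    q * j - p ∉ AddSubmonoid.closure ({p, q} : Set ℕ) := by
  simp only [AddSubmonoid.mem_closure_pair, smul_eq_mul, not_exists]
  intro a b h
  have hrep : (a + 1) * p + b * q = q * j := by rw [add_mul, one_mul, add_right_comm, h]; omega
  have hbj : b ≤ j := by nlinarith
  have hdvd : p ∣ q * (j - b) :=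
    ⟨a + 1, by rw [Nat.mul_sub, ← hrep, mul_comm b q, Nat.add_sub_cancel, mul_comm]⟩
  have hjb : j = b := by
    have := Nat.eq_zero_of_dvd_of_lt (hco.dvd_of_dvd_mul_left hdvd) (by omega)
    omega
  subst hjb
  have : (a + 1) * p = 0 := by rw [mul_comm j q] at hrep; omega
  simp only [mul_eq_zero, Nat.add_one_ne_zero, false_or] at this
  omega

theorem indicatorSeries_closure_pair_mul_one_sub_X_pow (hco : p.Coprime q) (hq : 0 < q) :
    indicatorSeries (AddSubmonoid.closure ({p, q} : Set ℕ)) * (1 - PowerSeries.X ^ p) =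
      ∑ j ∈ Finset.range p, PowerSeries.X ^ (q * j) := by
  set S := AddSubmonoid.closure ({p, q} : Set ℕ)
  ext k
  rw [mul_sub, mul_one, map_sub, PowerSeries.coeff_mul_X_pow', map_sum]
  simp only [PowerSeries.coeff_X_pow]
  by_cases hk : ∃ j < p, q * j = k
  · obtain ⟨j, hj, rfl⟩ := hk
    have hS : q * j ∈ S := (mem_closure_pair_iff_exists_mul_or_sub_mem hq).2 (.inl ⟨j, hj, rfl⟩)
    have hsub :
        (if p ≤ q * j then PowerSeries.coeff (q * j - p) (indicatorSeries S) else 0) = 0 := by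
      split_ifs with hpj
      · exact coeff_indicatorSeries_of_notMem (mul_sub_notMem_closure_pair hco hj hpj)
      · rfl
    simp [hsub, coeff_indicatorSeries_of_mem (S := S) hS, Nat.mul_left_cancel_iff hq, hj]
  · rw [Finset.sum_eq_zero fun j hj => if_neg fun h => hk ⟨j, Finset.mem_range.1 hj, h.symm⟩]
    have hS : k ∈ S ↔ p ≤ k ∧ k - p ∈ S := by
      simpa [hk] using mem_closure_pair_iff_exists_mul_or_sub_mem (p := p) hq (k := k)
    split_ifs with hpk
    · by_cases h : k ∈ S
      · rw [coeff_indicatorSeries_of_mem (S := S) h,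
          coeff_indicatorSeries_of_mem (S := S) (hS.1 h).2, sub_self]
      · rw [coeff_indicatorSeries_of_notMem (S := S) h,
          coeff_indicatorSeries_of_notMem (S := S) fun h' => h (hS.2 ⟨hpk, h'⟩), sub_self]
    · rw [coeff_indicatorSeries_of_notMem (S := S) fun h => hpk (hS.1 h).1, sub_zero]

theorem indicatorSeries_closure_pair_mul_one_sub_X_pow_mul (hco : p.Coprime q) (hq : 0 < q) :
    indicatorSeries (AddSubmonoid.closure ({p, q} : Set ℕ)) * (1 - PowerSeries.X ^ p) *
      (1 - PowerSeries.X ^ q) = 1 - PowerSeries.X ^ (p * q) := by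
  rw [indicatorSeries_closure_pair_mul_one_sub_X_pow hco hq]
  have hgeom := geom_sum_mul (PowerSeries.X ^ q : PowerSeries ℤ) p
  simp only [← pow_mul, mul_comm q p] at hgeom
  linear_combination -hgeom

lemma frobeniusNumber_pair' (hco : p.Coprime q) (hp : 1 < p) (hq : 1 < q) :
    FrobeniusNumber ((p - 1) * (q - 1) - 1) {p, q} := by
  convert frobeniusNumber_pair hco hp hq using 1
  obtain ⟨p, rfl⟩ := Nat.exists_eq_add_of_lt hp
  obtain ⟨q, rfl⟩ := Nat.exists_eq_add_of_lt hq
  simp only [Nat.add_sub_cancel]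
  ring_nf
  omega

theorem X_pow_mul_sub_one_mul_X_sub_one (hco : p.Coprime q) (hp : 1 < p) (hq : 1 < q) :
    ((X : ℤ[X]) ^ (p * q) - 1) * (X - 1) = (X ^ p - 1) * (X ^ q - 1) *
      PowerSeries.trunc ((p - 1) * (q - 1) + 1)
        ((1 - PowerSeries.X) * indicatorSeries (AddSubmonoid.closure ({p, q} : Set ℕ))) := by
  obtain ⟨-, hF⟩ := frobeniusNumber_iff.1 (frobeniusNumber_pair' hco hp hq)
  have hN : 0 < (p - 1) * (q - 1) := Nat.mul_pos (by omega) (by omega)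
  have hvanish : ∀ m ≥ (p - 1) * (q - 1) + 1, PowerSeries.coeff m
      ((1 - PowerSeries.X) * indicatorSeries (AddSubmonoid.closure ({p, q} : Set ℕ))) = 0 := by
    rintro (_ | m) hm
    · omega
    rw [PowerSeries.coeff_succ_one_sub_X_mul, coeff_indicatorSeries_of_mem (hF _ (by omega)),
      coeff_indicatorSeries_of_mem (hF _ (by omega)), sub_self]
  apply Polynomial.coe_injective
  simp only [Polynomial.coe_mul, Polynomial.coe_sub, Polynomial.coe_pow, Polynomial.coe_X,
    Polynomial.coe_one, PowerSeries.coe_trunc_of_coeff_eq_zero hvanish]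
  linear_combination
    (PowerSeries.X - 1) * indicatorSeries_closure_pair_mul_one_sub_X_pow_mul hco (by omega)

end ClosurePair

theorem alexander_torus_alternating (p q : ℕ) (hp : 1 < p) (hpq : p < q)
    (hco : Nat.Coprime p q) :
    ∃ (n : ℕ) (a : ℕ → ℕ),
      (∀ i j, i < j → j ≤ 2 * n → a j < a i) ∧
      a 0 = (p - 1) * (q - 1) ∧
      a (2 * n) = 0 ∧
      ((X : Polynomial ℤ) ^ (p * q) - 1) * (X - 1) =
        ((X : Polynomial ℤ) ^ p - 1) * ((X : Polynomial ℤ) ^ q - 1) *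
          ∑ i ∈ Finset.range (2 * n + 1), (-1 : Polynomial ℤ) ^ i * X ^ (a i) := by
  have hq : 1 < q := hp.trans hpq
  obtain ⟨hgap, hF⟩ := frobeniusNumber_iff.1 (frobeniusNumber_pair' hco hp hq)
  have hN : 0 < (p - 1) * (q - 1) := Nat.mul_pos (by omega) (by omega)
  obtain ⟨n, a, ha, ha0, ha2n, hsum⟩ := exists_trunc_eq_alternating_sum_of_sub_one_notMem
    (AddSubmonoid.zero_mem _) (hF _ (Nat.sub_one_lt hN.ne')) hgap
  exact ⟨n, a, ha, ha0, ha2n, by rw [X_pow_mul_sub_one_mul_X_sub_one hco hp hq, hsum]⟩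
end

section
/- Let p > 1 and k ≥ 1 be integers and let b = b_{p,pk+1} be the sequence of successive gaps of the exponents of the Alexander polynomial of T_{p,pk+1}, i.e. b_i = a_{i-1} - a_i where (t^{p(pk+1)}-1)(t-1)/((t^p-1)(t^{pk+1}-1)) = \sum_{i=0}^{2n}(-1)^i t^{a_i} with a_0 > ... > a_{2n}. Then b is the concatenation, for j = 1, ..., p-1, of k copies of the pair (j, p-j). -/
/-!
List the exponents in increasing order as `e (2m) = p m` and `e (2m+1) = p m + ⌊m/k⌋ + 1`.
The gap sequence `e (t+1) - e t` is a palindrome on `t < 2k(p-1)` (because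
`⌊(k(p-1) - 1 - m)/k⌋ = p - 2 - ⌊m/k⌋`), so the exponents of the theorem are
`a i = e (2k(p-1) - i)` and have the same gaps.

For the polynomial identity, multiply `∑ (-1)^i x^(e i)` by `x^p - 1`. The `k` pairs with
`⌊m/k⌋ = j` form a geometric series in `x^p`, so with `z = x^(pk)` and `w = x^(pk+1)` they
contribute `x^p (z^(j+1) - z^j) - (w^(j+1) - x w^j)`. Summing over `j < p - 1` telescopes to
`(x - 1)(1 + w + ⋯ + w^(p-1))`, and `(w - 1)(1 + w + ⋯ + w^(p-1)) = x^(p(pk+1)) - 1`.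
-/

open Polynomial Finset

def ascendingExponent (p k i : ℕ) : ℕ := p * (i / 2) + i % 2 * (i / 2 / k + 1)

def torusGap (p k t : ℕ) : ℕ := if t % 2 = 0 then t / (2 * k) + 1 else p - (t / (2 * k) + 1)

theorem Nat.sub_one_sub_div_of_lt_mul {m n r : ℕ} (h : m < n * r) :
    (n * r - 1 - m) / n = r - 1 - m / n := by
  have hn : 0 < n := Nat.pos_of_ne_zero (by rintro rfl; simp at h)
  have hq : m / n < r := Nat.div_lt_of_lt_mul h
  obtain ⟨s, rfl⟩ : ∃ s, r = m / n + 1 + s := ⟨r - (m / n + 1), by omega⟩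
  have hm := Nat.div_add_mod m n
  have hmod := Nat.mod_lt m hn
  rw [show m / n + 1 + s - 1 - m / n = s by omega]
  apply Nat.div_eq_of_lt_le <;>
    simp only [mul_add, add_mul, mul_one, one_mul, mul_comm s n] <;> omega

section
variable (p k : ℕ)

@[simp] lemma ascendingExponent_zero : ascendingExponent p k 0 = 0 := by
  simp [ascendingExponent]

@[simp] lemma ascendingExponent_two_mul (m : ℕ) : ascendingExponent p k (2 * m) = p * m := by
  simp [ascendingExponent]

@[simp] lemma ascendingExponent_two_mul_add_one (m : ℕ) :
    ascendingExponent p k (2 * m + 1) = p * m + (m / k + 1) := by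
  simp [ascendingExponent, Nat.add_mod, Nat.add_div]

lemma ascendingExponent_succ_sub (t : ℕ) :
    ascendingExponent p k (t + 1) - ascendingExponent p k t = torusGap p k t := by
  obtain ⟨m, rfl | rfl⟩ := Nat.even_or_odd' t
  · simp [torusGap, Nat.mul_div_mul_left]
  · rw [show 2 * m + 1 + 1 = 2 * (m + 1) by ring, ascendingExponent_two_mul,
      ascendingExponent_two_mul_add_one, torusGap, ← Nat.div_div_eq_div_mul,
      if_neg (by omega), show (2 * m + 1) / 2 = m by omega, mul_add_one]
    omega

lemma torusGap_pos {t : ℕ} (ht : t < 2 * (k * (p - 1))) : 0 < torusGap p k t := by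
  rw [← mul_assoc] at ht
  have hq := Nat.div_lt_of_lt_mul ht
  unfold torusGap
  generalize t / (2 * k) = q at hq
  split_ifs <;> omega

lemma torusGap_reflect {t : ℕ} (ht : t < 2 * (k * (p - 1))) :
    torusGap p k (2 * (k * (p - 1)) - 1 - t) = torusGap p k t := by
  rw [← mul_assoc] at ht
  have hq := Nat.div_lt_of_lt_mul ht
  have hdiv := Nat.sub_one_sub_div_of_lt_mul ht
  rw [mul_assoc] at ht hdiv
  simp only [torusGap, hdiv]
  generalize t / (2 * k) = q at hq
  split_ifs <;> omega

lemma ascendingExponent_strictMonoOn :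
    StrictMonoOn (ascendingExponent p k) (Set.Iic (2 * (k * (p - 1)))) :=
  strictMonoOn_Iic_of_lt_succ fun t ht => Nat.lt_of_sub_pos <| by
    rw [Order.succ_eq_add_one, ascendingExponent_succ_sub]
    exact torusGap_pos p k ht

end

lemma sum_range_mul_eq_sum_sum {M : Type*} [AddCommMonoid M] (f : ℕ → M) (k r : ℕ) :
    ∑ m ∈ range (k * r), f m = ∑ j ∈ range r, ∑ v ∈ range k, f (k * j + v) := by
  induction r with
  | zero => simp
  | succ r ih => rw [mul_add_one, sum_range_add, ih, sum_range_succ]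

section
variable {R : Type*} [Ring R]

lemma alternating_sum_range_reflect (f : ℕ → R) (n : ℕ) :
    ∑ i ∈ range (2 * n + 1), (-1) ^ i * f (2 * n - i)
      = ∑ i ∈ range (2 * n + 1), (-1) ^ i * f i := by
  rw [← sum_range_reflect]
  refine sum_congr rfl fun i hi => ?_
  have hi : i ≤ 2 * n := Nat.lt_succ_iff.mp (mem_range.mp hi)
  rw [add_tsub_cancel_right, Nat.sub_sub_self hi, neg_one_pow_eq_pow_mod_two,
    neg_one_pow_eq_pow_mod_two (n := i), show (2 * n - i) % 2 = i % 2 by omega]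

lemma alternating_sum_range_two_mul_add_one (f : ℕ → R) (n : ℕ) :
    ∑ i ∈ range (2 * n + 1), (-1) ^ i * f i
      = f 0 + ∑ m ∈ range n, (f (2 * (m + 1)) - f (2 * m + 1)) := by
  induction n with
  | zero => simp
  | succ n ih =>
    rw [show 2 * (n + 1) + 1 = 2 * n + 1 + 1 + 1 by ring, sum_range_succ, sum_range_succ, ih,
      sum_range_succ, Odd.neg_one_pow ⟨n, rfl⟩, Even.neg_one_pow ⟨n + 1, by ring⟩,
      show 2 * n + 1 + 1 = 2 * (n + 1) by ring, neg_one_mul, one_mul]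
    abel
end

lemma sub_one_mul_alternating_sum {R : Type*} [CommRing R] (x : R) (p k : ℕ) :
    (x ^ p - 1) * ∑ i ∈ range (2 * (k * (p - 1)) + 1), (-1) ^ i * x ^ ascendingExponent p k i
      = (x - 1) * ∑ j ∈ range p, (x ^ (p * k + 1)) ^ j := by
  rcases p with _ | r
  · simp
  set y := x ^ (r + 1)
  set w := x ^ ((r + 1) * k + 1)
  have hblock : ∀ j ∈ range r,
      ∑ v ∈ range k, (x ^ ascendingExponent (r + 1) k (2 * (k * j + v + 1))
        - x ^ ascendingExponent (r + 1) k (2 * (k * j + v) + 1))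
      = (y - x ^ (j + 1)) * (y ^ k) ^ j * ∑ v ∈ range k, y ^ v := by
    intro j _
    rw [mul_sum]
    refine sum_congr rfl fun v hv => ?_
    have hv := mem_range.mp hv
    rw [ascendingExponent_two_mul, ascendingExponent_two_mul_add_one,
      Nat.mul_add_div (by omega), Nat.div_eq_of_lt hv, add_zero]
    ring
  have htelescope :
      (y - 1) * ∑ j ∈ range r, (y - x ^ (j + 1)) * (y ^ k) ^ j * ∑ v ∈ range k, y ^ v
        = y * ((y ^ k) ^ r - 1)
          - (∑ j ∈ range r, w ^ (j + 1) - x * ∑ j ∈ range r, w ^ j) := by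
    calc _ = ∑ j ∈ range r,
          (y * ((y ^ k) ^ (j + 1) - (y ^ k) ^ j) - (w ^ (j + 1) - x * w ^ j)) := by
          rw [mul_sum]
          refine sum_congr rfl fun j _ => ?_
          linear_combination (y - x ^ (j + 1)) * (y ^ k) ^ j * geom_sum_mul y k
      _ = _ := by
          rw [sum_sub_distrib, ← mul_sum, sum_range_sub, sum_sub_distrib, ← mul_sum, pow_zero]
  have hsucc : ∑ j ∈ range (r + 1), w ^ j = ∑ j ∈ range r, w ^ j + w ^ r :=
    sum_range_succ _ _
  have hsucc' : ∑ j ∈ range (r + 1), w ^ j = ∑ j ∈ range r, w ^ (j + 1) + 1 := by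
    rw [sum_range_succ', pow_zero]
  rw [add_tsub_cancel_right, alternating_sum_range_two_mul_add_one, sum_range_mul_eq_sum_sum,
    sum_congr rfl hblock, ascendingExponent_zero, pow_zero]
  linear_combination htelescope - x * hsucc + hsucc'

theorem gap_sequence_torus_pk1_general (p k : ℕ) :
    ∃ a : ℕ → ℕ,
      (∀ i j, i < j → j ≤ 2 * (k * (p - 1)) → a j < a i) ∧
      a 0 = (p - 1) * (p * k) ∧
      a (2 * (k * (p - 1))) = 0 ∧
      ((X : Polynomial ℤ) ^ (p * (p * k + 1)) - 1) * (X - 1) =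
        ((X : Polynomial ℤ) ^ p - 1) * ((X : Polynomial ℤ) ^ (p * k + 1) - 1) *
          ∑ i ∈ Finset.range (2 * (k * (p - 1)) + 1), (-1 : Polynomial ℤ) ^ i * X ^ (a i) ∧
      ∀ i, 1 ≤ i → i ≤ 2 * (k * (p - 1)) →
        a (i - 1) - a i =
          if (i - 1) % 2 = 0 then (i - 1) / (2 * k) + 1
          else p - ((i - 1) / (2 * k) + 1) := by
  refine ⟨fun i => ascendingExponent p k (2 * (k * (p - 1)) - i), ?_, ?_, ?_, ?_, ?_⟩
  · intro i j hij hj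
    exact ascendingExponent_strictMonoOn p k (Set.mem_Iic.2 (Nat.sub_le _ _))
      (Set.mem_Iic.2 (Nat.sub_le _ _)) (by omega)
  · dsimp only
    rw [Nat.sub_zero, ascendingExponent_two_mul]
    ring
  · dsimp only
    rw [Nat.sub_self, ascendingExponent_zero]
  · rw [alternating_sum_range_reflect (fun i => X ^ ascendingExponent p k i), mul_right_comm,
      sub_one_mul_alternating_sum, mul_assoc, geom_sum_mul, ← pow_mul]
    ring
  · intro i hi hi'
    dsimp only
    rw [show 2 * (k * (p - 1)) - (i - 1) = 2 * (k * (p - 1)) - i + 1 by omega,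
      ascendingExponent_succ_sub,
      show 2 * (k * (p - 1)) - i = 2 * (k * (p - 1)) - 1 - (i - 1) by omega,
      torusGap_reflect p k (by omega), torusGap]

theorem gap_sequence_torus_pk1 (p k : ℕ) (hp : 1 < p) (hk : 1 ≤ k) :
    ∃ a : ℕ → ℕ,
      (∀ i j, i < j → j ≤ 2 * (k * (p - 1)) → a j < a i) ∧
      a 0 = (p - 1) * (p * k) ∧
      a (2 * (k * (p - 1))) = 0 ∧
      ((X : Polynomial ℤ) ^ (p * (p * k + 1)) - 1) * (X - 1) =
        ((X : Polynomial ℤ) ^ p - 1) * ((X : Polynomial ℤ) ^ (p * k + 1) - 1) *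
          ∑ i ∈ Finset.range (2 * (k * (p - 1)) + 1), (-1 : Polynomial ℤ) ^ i * X ^ (a i) ∧
      ∀ i, 1 ≤ i → i ≤ 2 * (k * (p - 1)) →
        a (i - 1) - a i =
          if (i - 1) % 2 = 0 then (i - 1) / (2 * k) + 1
          else p - ((i - 1) / (2 * k) + 1) :=
  gap_sequence_torus_pk1_general p k
end

section
/- Let F be a field and let H, H' be finitely generated F[u]-modules. Suppose there exist F[u]-module homomorphisms φ : H → H' and ψ : H' → H such that φ ∘ ψ = u^k · Id_{H'} and ψ ∘ φ = u^k · Id_H for some k ≥ 0. If H contains an element whose annihilator is exactly the ideal (u^n) with n > k, then H' contains an element whose annihilator is (u^m) for some m ≥ n - k. -/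
open Polynomial

theorem torsion_order_transfer (F : Type*) [Field F]
    (H H' : Type*) [AddCommGroup H] [Module (Polynomial F) H]
    [AddCommGroup H'] [Module (Polynomial F) H']
    [Module.Finite (Polynomial F) H] [Module.Finite (Polynomial F) H']
    (k : ℕ) (φ : H →ₗ[Polynomial F] H') (ψ : H' →ₗ[Polynomial F] H)
    (hφψ : φ.comp ψ = (X : Polynomial F) ^ k • LinearMap.id)
    (hψφ : ψ.comp φ = (X : Polynomial F) ^ k • LinearMap.id)
    (x : H) (n : ℕ) (hn : k < n)
    (hx : Ideal.torsionOf (Polynomial F) H x = Ideal.span {(X : Polynomial F) ^ n}) :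
    ∃ (y : H') (m : ℕ), n - k ≤ m ∧
      Ideal.torsionOf (Polynomial F) H' y = Ideal.span {(X : Polynomial F) ^ m} := by
  set y := φ x with hy
  -- X^n kills x
  have hxn : (X : Polynomial F) ^ n • x = 0 := by
    have : (X : Polynomial F) ^ n ∈ Ideal.torsionOf (Polynomial F) H x := by
      rw [hx]; exact Ideal.subset_span rfl
    simpa [Ideal.mem_torsionOf_iff] using this
  -- X^(n-1) does not kill x
  have hxn1 : (X : Polynomial F) ^ (n - 1) • x ≠ 0 := by
    intro h
    have hmem : (X : Polynomial F) ^ (n - 1) ∈ Ideal.torsionOf (Polynomial F) H x :=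
      (Ideal.mem_torsionOf_iff _ _).mpr h
    rw [hx, Ideal.mem_span_singleton] at hmem
    have hd := Polynomial.natDegree_le_of_dvd hmem (pow_ne_zero _ Polynomial.X_ne_zero)
    simp [Polynomial.natDegree_X_pow] at hd
    omega
  -- X^n kills y
  have hyn : (X : Polynomial F) ^ n • y = 0 := by
    rw [hy, ← LinearMap.map_smul, hxn, LinearMap.map_zero]
  -- X^(n-1-k) does not kill y
  have hyn1 : (X : Polynomial F) ^ (n - 1 - k) • y ≠ 0 := by
    intro h
    apply hxn1
    have : ψ ((X : Polynomial F) ^ (n - 1 - k) • y) = 0 := by rw [h, LinearMap.map_zero]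
    rw [hy, LinearMap.map_smul] at this
    have hpsi : ψ (φ x) = (X : Polynomial F) ^ k • x := by
      have := LinearMap.congr_fun hψφ x
      simpa using this
    rw [hpsi, smul_smul, ← pow_add] at this
    have hnk : n - 1 - k + k = n - 1 := by omega
    rwa [hnk] at this
  -- torsionOf y is principal
  obtain ⟨g, hg⟩ := (Ideal.torsionOf (Polynomial F) H' y).isPrincipal_iff.mp inferInstance
  have hgdvd : g ∣ (X : Polynomial F) ^ n := by
    rw [← Ideal.mem_span_singleton]
    show _ ∈ Submodule.span (Polynomial F) {g}
    rw [← hg]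
    exact (Ideal.mem_torsionOf_iff _ _).mpr hyn
  obtain ⟨i, hin, hassoc⟩ := (dvd_prime_pow Polynomial.prime_X n).mp hgdvd
  have hspan : Ideal.torsionOf (Polynomial F) H' y = Ideal.span {(X : Polynomial F) ^ i} := by
    rw [hg]
    exact Ideal.span_singleton_eq_span_singleton.mpr hassoc
  refine ⟨y, i, ?_, hspan⟩
  by_contra hcon
  push_neg at hcon
  apply hyn1
  have hmem : (X : Polynomial F) ^ (n - 1 - k) ∈ Ideal.torsionOf (Polynomial F) H' y := by
    rw [hspan, Ideal.mem_span_singleton]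
    exact pow_dvd_pow _ (by omega)
  exact (Ideal.mem_torsionOf_iff _ _).mp hmem
end

section
/- For decreasing sequences of positive integers, define: for n = (n_1 ≥ ... ≥ n_k > 0), let n - 1 = (n_1 - 1 ≥ ... ≥ n_l - 1) where l is the largest index with n_l > 1 (the empty sequence if all n_i = 1), and define n - (p+1) = (n - p) - 1 recursively. Write n ≥ n' if n has at least as many terms as n' and each term of n is at least the corresponding term of n'. Define d(n, n') as the smallest nonnegative integer ℓ with n ≥ n' - ℓ and n' ≥ n - ℓ. Then d is a pseudometric: d(n, n) = 0, d(n, n') = d(n', n), and d(n, n'') ≤ d(n, n') + d(n', n'') for all decreasing sequences of positive integers n, n', n''. -/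
/-- Subtract 1 from each entry and delete the entries that become 0. -/
def DecSeq.sub1 (l : List ℕ) : List ℕ :=
  (l.map fun x => x - 1).filter fun x => x ≠ 0

/-- `l - p`: the `p`-fold iterate of `DecSeq.sub1`. -/
def DecSeq.sub (l : List ℕ) (p : ℕ) : List ℕ :=
  DecSeq.sub1^[p] l

/-- `l ≥ l'`: `l` has at least as many entries as `l'` and dominates it entrywise. -/
def DecSeq.Dominates (l l' : List ℕ) : Prop :=
  l'.length ≤ l.length ∧ ∀ i < l'.length, l'.getD i 0 ≤ l.getD i 0

/-- The distance `d(l, l')`: the smallest `ℓ` with `l ≥ l' - ℓ` and `l' ≥ l - ℓ`. -/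
noncomputable def DecSeq.dist (l l' : List ℕ) : ℕ :=
  sInf {ℓ : ℕ | DecSeq.Dominates l (DecSeq.sub l' ℓ) ∧ DecSeq.Dominates l' (DecSeq.sub l ℓ)}

namespace DecSeq

lemma sub1_sorted {l : List ℕ} (h : l.Pairwise (· ≥ ·)) : (sub1 l).Pairwise (· ≥ ·) := by
  have h1 : ((l.map fun x => x - 1)).Pairwise (· ≥ ·) :=
    h.map _ (fun a b hab => Nat.sub_le_sub_right hab 1)
  exact h1.sublist List.filter_sublist

lemma sub1_pos {l : List ℕ} : ∀ x ∈ sub1 l, 0 < x := by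
  intro x hx
  have := List.of_mem_filter hx
  simp only [ne_eq, decide_not, Bool.not_eq_true', decide_eq_false_iff_not] at this
  omega

lemma sub1_getD {l : List ℕ} (h : l.Pairwise (· ≥ ·)) (i : ℕ) :
    (sub1 l).getD i 0 = l.getD i 0 - 1 := by
  induction l generalizing i with
  | nil => simp [sub1]
  | cons a t ih =>
    have ht : t.Pairwise (· ≥ ·) := h.of_cons
    have hat : ∀ b ∈ t, b ≤ a := fun b hb => List.rel_of_pairwise_cons h (a' := b) hb
    by_cases ha : a ≤ 1
    · have hz : sub1 (a :: t) = [] := by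
        apply List.eq_nil_iff_forall_not_mem.2
        intro x hx
        have hpos := sub1_pos x hx
        have := List.of_mem_filter hx
        have hmem := List.mem_filter.1 hx |>.1
        obtain ⟨y, hy, rfl⟩ := List.mem_map.1 hmem
        have hy1 : y ≤ 1 := by
          rcases List.mem_cons.1 hy with rfl | hy'
          · exact ha
          · exact le_trans (hat y hy') ha
        omega
      rw [hz]
      cases i with
      | zero => simp; omega
      | succ j =>
        simp only [List.getD_nil, List.getD_cons_succ]
        rcases Nat.lt_or_ge j t.length with hj | hj
        · have : t.getD j 0 ≤ 1 := by
            rw [List.getD_eq_getElem _ _ hj]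
            exact le_trans (hat _ (List.getElem_mem hj)) ha
          omega
        · rw [List.getD_eq_default _ _ hj]
    · have hstep : sub1 (a :: t) = (a - 1) :: sub1 t := by
        simp only [sub1, List.map_cons, List.filter_cons]
        have : (a - 1 ≠ 0) := by omega
        simp [this]
      rw [hstep]
      cases i with
      | zero => simp
      | succ j => simpa using ih ht j

lemma sub_sorted {l : List ℕ} (h : l.Pairwise (· ≥ ·)) (p : ℕ) :
    (sub l p).Pairwise (· ≥ ·) := by
  induction p with
  | zero => exact h
  | succ q ih =>
    rw [sub, Function.iterate_succ_apply']
    exact sub1_sorted ih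

lemma sub_getD {l : List ℕ} (h : l.Pairwise (· ≥ ·)) (p i : ℕ) :
    (sub l p).getD i 0 = l.getD i 0 - p := by
  induction p with
  | zero => simp [sub]
  | succ q ih =>
    rw [sub, Function.iterate_succ_apply', ← sub]
    rw [sub1_getD (sub_sorted h q) i, ih]
    omega

lemma sub_pos {l : List ℕ} (hp : ∀ x ∈ l, 0 < x) (p : ℕ) : ∀ x ∈ sub l p, 0 < x := by
  induction p with
  | zero => exact hp
  | succ q ih =>
    rw [sub, Function.iterate_succ_apply', ← sub]
    exact fun x hx => sub1_pos x hx

lemma dominates_iff {l l' : List ℕ} (hp' : ∀ x ∈ l', 0 < x) :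
    Dominates l l' ↔ ∀ i, l'.getD i 0 ≤ l.getD i 0 := by
  constructor
  · rintro ⟨hlen, h⟩ i
    rcases Nat.lt_or_ge i l'.length with hi | hi
    · exact h i hi
    · rw [List.getD_eq_default _ _ hi]; exact Nat.zero_le _
  · intro h
    have hlen : l'.length ≤ l.length := by
      by_contra hc
      push_neg at hc
      have hi : l.length < l'.length := hc
      have h1 : l'.getD l.length 0 > 0 := by
        rw [List.getD_eq_getElem _ _ hi]
        exact hp' _ (List.getElem_mem hi)
      have h2 : l.getD l.length 0 = 0 := List.getD_eq_default _ _ le_rfl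
      have := h l.length
      omega
    exact ⟨hlen, fun i _ => h i⟩

lemma mem_dist_set_iff {l l' : List ℕ} (h : l.Pairwise (· ≥ ·)) (hp : ∀ x ∈ l, 0 < x)
    (h' : l'.Pairwise (· ≥ ·)) (hp' : ∀ x ∈ l', 0 < x) (ℓ : ℕ) :
    (Dominates l (sub l' ℓ) ∧ Dominates l' (sub l ℓ)) ↔
      (∀ i, l'.getD i 0 - ℓ ≤ l.getD i 0) ∧ (∀ i, l.getD i 0 - ℓ ≤ l'.getD i 0) := by
  rw [dominates_iff (sub_pos hp' ℓ), dominates_iff (sub_pos hp ℓ)]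
  constructor
  · rintro ⟨h1, h2⟩
    exact ⟨fun i => by have := h1 i; rwa [sub_getD h' ℓ i] at this,
           fun i => by have := h2 i; rwa [sub_getD h ℓ i] at this⟩
  · rintro ⟨h1, h2⟩
    exact ⟨fun i => by rw [sub_getD h' ℓ i]; exact h1 i,
           fun i => by rw [sub_getD h ℓ i]; exact h2 i⟩

lemma getD_le_head {l : List ℕ} (h : l.Pairwise (· ≥ ·)) (i : ℕ) :
    l.getD i 0 ≤ l.getD 0 0 := by
  cases l with
  | nil => simp
  | cons a t =>
    cases i with
    | zero => exact le_rfl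
    | succ j =>
      simp only [List.getD_cons_succ, List.getD_cons_zero]
      rcases Nat.lt_or_ge j t.length with hj | hj
      · rw [List.getD_eq_getElem _ _ hj]
        exact List.rel_of_pairwise_cons h (List.getElem_mem hj)
      · rw [List.getD_eq_default _ _ hj]; exact Nat.zero_le _

end DecSeq

theorem decseq_dist_pseudometric (n n' n'' : List ℕ)
    (hn : List.Pairwise (· ≥ ·) n) (hnp : ∀ x ∈ n, 0 < x)
    (hn' : List.Pairwise (· ≥ ·) n') (hnp' : ∀ x ∈ n', 0 < x)
    (hn'' : List.Pairwise (· ≥ ·) n'') (hnp'' : ∀ x ∈ n'', 0 < x) :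
    DecSeq.dist n n = 0 ∧ DecSeq.dist n n' = DecSeq.dist n' n ∧
    DecSeq.dist n n'' ≤ DecSeq.dist n n' + DecSeq.dist n' n'' := by
  have nonempty : ∀ (l l' : List ℕ), l.Pairwise (· ≥ ·) → (∀ x ∈ l, 0 < x) →
      l'.Pairwise (· ≥ ·) → (∀ x ∈ l', 0 < x) →
      (l.getD 0 0 + l'.getD 0 0) ∈
        {ℓ : ℕ | DecSeq.Dominates l (DecSeq.sub l' ℓ) ∧ DecSeq.Dominates l' (DecSeq.sub l ℓ)} := by
    intro l l' h hp h' hp'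
    rw [Set.mem_setOf_eq, DecSeq.mem_dist_set_iff h hp h' hp']
    constructor
    · intro i
      have := DecSeq.getD_le_head h' i
      omega
    · intro i
      have := DecSeq.getD_le_head h i
      omega
  refine ⟨?_, ?_, ?_⟩
  · apply Nat.sInf_eq_zero.2
    left
    rw [Set.mem_setOf_eq, DecSeq.mem_dist_set_iff hn hnp hn hnp]
    exact ⟨fun i => Nat.sub_le _ _, fun i => Nat.sub_le _ _⟩
  · unfold DecSeq.dist
    congr 1
    ext ℓ
    rw [Set.mem_setOf_eq, Set.mem_setOf_eq]
    exact and_comm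
  · set S1 := {ℓ : ℕ | DecSeq.Dominates n (DecSeq.sub n' ℓ) ∧ DecSeq.Dominates n' (DecSeq.sub n ℓ)}
    set S2 := {ℓ : ℕ | DecSeq.Dominates n' (DecSeq.sub n'' ℓ) ∧ DecSeq.Dominates n'' (DecSeq.sub n' ℓ)}
    have h1 : DecSeq.dist n n' ∈ S1 := Nat.sInf_mem ⟨_, nonempty n n' hn hnp hn' hnp'⟩
    have h2 : DecSeq.dist n' n'' ∈ S2 := Nat.sInf_mem ⟨_, nonempty n' n'' hn' hnp' hn'' hnp''⟩
    rw [Set.mem_setOf_eq, DecSeq.mem_dist_set_iff hn hnp hn' hnp'] at h1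
    rw [Set.mem_setOf_eq, DecSeq.mem_dist_set_iff hn' hnp' hn'' hnp''] at h2
    apply Nat.sInf_le
    rw [Set.mem_setOf_eq, DecSeq.mem_dist_set_iff hn hnp hn'' hnp'']
    constructor
    · intro i
      have a1 := h1.1 i
      have a2 := h2.1 i
      omega
    · intro i
      have a1 := h1.2 i
      have a2 := h2.2 i
      omega
end

section
/- For integers p > 1 and n ≥ 1, one has k(p, pn+1) = ⌊p/2⌋, where k is the minimal number of steps of the relation (p,q) ⇝ (p - 2i, q - 2j) (with 0 < i ≤ p/2 and iq = jp ± 1) needed to reach a pair whose first coordinate is 0 or 1. -/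
/-- One step `(p, q) ⇝ (p - 2i, q - 2j)` of the rational-replacement relation on pairs,
where `0 < i ≤ p/2`, `j > 0` and `i*q = j*p ± 1`. -/
def RStep : ℕ × ℕ → ℕ × ℕ → Prop := fun pq pq' =>
  ∃ i j : ℕ, 0 < i ∧ 2 * i ≤ pq.1 ∧ 0 < j ∧
    (i * pq.2 = j * pq.1 + 1 ∨ i * pq.2 + 1 = j * pq.1) ∧
    pq'.1 = pq.1 - 2 * i ∧ pq'.2 = pq.2 - 2 * j

/-- There is a chain of `k` steps from `(p, q)` to a pair whose first coordinate is `0` or `1`. -/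
def Reaches (p q k : ℕ) : Prop :=
  ∃ c : ℕ → ℕ × ℕ, c 0 = (p, q) ∧ (∀ m < k, RStep (c m) (c (m + 1))) ∧ (c k).1 ≤ 1

/-- `k(p,q)`: the minimal number of steps needed to reach first coordinate `0` or `1`. -/
noncomputable def kpq (p q : ℕ) : ℕ := sInf {k | Reaches p q k}

lemma reaches_upper (p n : ℕ) (hn : 1 ≤ n) : Reaches p (p * n + 1) (p / 2) := by
  refine ⟨fun m => (p - 2 * m, (p - 2 * m) * n + 1), by simp, ?_, ?_⟩
  · intro m hm
    have ha : 2 ≤ p - 2 * m := by omega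
    refine ⟨1, n, one_pos, by simpa using ha, hn, Or.inl (by ring), by simp; omega, ?_⟩
    simp only
    have h3 : p - 2 * (m + 1) = p - 2 * m - 2 := by omega
    have h1 : (p - 2 * m - 2) * n = (p - 2 * m) * n - 2 * n := by rw [Nat.sub_mul]
    have h2 : 2 * n ≤ (p - 2 * m) * n := Nat.mul_le_mul_right n ha
    rw [h3, h1]
    omega
  · simp only
    omega

lemma reaches_lower (p : ℕ) : ∀ n k : ℕ, 1 ≤ n → Reaches p (p * n + 1) k → p / 2 ≤ k := by
  induction p using Nat.strong_induction_on with
  | _ p ih =>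
    intro n k hn hr
    rcases Nat.lt_or_ge p 2 with hp | hp
    · omega
    · obtain ⟨c, hc0, hstep, hend⟩ := hr
      have hk : 1 ≤ k := by
        rcases Nat.eq_zero_or_pos k with rfl | h
        · rw [hc0] at hend; simp at hend; omega
        · exact h
      have h1 := hstep 0 hk
      rw [hc0] at h1
      obtain ⟨i, j, hi, h2i, hj, hcase, hfst, hsnd⟩ := h1
      simp only [Nat.zero_add] at h2i hcase hfst hsnd
      have hilt : i < p := by omega
      rcases hcase with hA | hB
      · -- i * (p*n+1) = j*p + 1, so i ≡ 1 mod p, hence i = 1, j = n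
        have hA' : p * (i * n) + i = p * j + 1 := by
          calc p * (i * n) + i = i * (p * n + 1) := by ring
            _ = j * p + 1 := hA
            _ = p * j + 1 := by ring
        have hm1 : (i + p * (i * n)) % p = i % p := Nat.add_mul_mod_self_left i p (i * n)
        have hm2 : (1 + p * j) % p = 1 % p := Nat.add_mul_mod_self_left 1 p j
        have hi1 : i = 1 := by
          have he : (i + p * (i * n)) = (1 + p * j) := by omega
          rw [he] at hm1
          have hmi : i % p = i := Nat.mod_eq_of_lt hilt
          have hm1' : 1 % p = 1 := Nat.mod_eq_of_lt (by omega)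
          omega
        subst hi1
        simp only [one_mul] at hA'
        have hjn : j = n := by
          have : p * n = p * j := by omega
          exact (Nat.eq_of_mul_eq_mul_left (by omega) this).symm
        rw [hjn] at hsnd
        have hsnd' : (c 1).2 = (p - 2) * n + 1 := by
          have h1 : (p - 2) * n = p * n - 2 * n := by rw [Nat.sub_mul]
          have h2 : 2 * n ≤ p * n := Nat.mul_le_mul_right n hp
          omega
        have hfst' : (c 1).1 = p - 2 := by omega
        have hr' : Reaches (p - 2) ((p - 2) * n + 1) (k - 1) := by
          refine ⟨fun m => c (m + 1), by rw [Prod.ext_iff]; exact ⟨hfst', hsnd'⟩, ?_, ?_⟩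
          · intro m hm
            exact hstep (m + 1) (by omega)
          · have hk1 : k - 1 + 1 = k := by omega
            simpa [hk1] using hend
        have := ih (p - 2) (by omega) n (k - 1) hn hr'
        omega
      · -- i*(p*n+1) + 1 = j*p, so p ∣ i+1, i+1 = p, hence p = 2
        have hB' : p * (i * n) + (i + 1) = p * j := by
          calc p * (i * n) + (i + 1) = i * (p * n + 1) + 1 := by ring
            _ = j * p := hB
            _ = p * j := by ring
        have hm1 : ((i + 1) + p * (i * n)) % p = (i + 1) % p :=
          Nat.add_mul_mod_self_left _ p _
        have hm2 : (p * j) % p = 0 := Nat.mul_mod_right p j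
        have he : ((i + 1) + p * (i * n)) = p * j := by omega
        rw [he, hm2] at hm1
        have hip : i + 1 = p := by
          rcases Nat.lt_or_ge (i + 1) p with h | h
          · have := Nat.mod_eq_of_lt h; omega
          · omega
        omega

theorem kpq_of_pn_add_one (p n : ℕ) (hp : 1 < p) (hn : 1 ≤ n) :
    kpq p (p * n + 1) = p / 2 := by
  have h1 : Reaches p (p * n + 1) (p / 2) := reaches_upper p n hn
  exact le_antisymm (Nat.sInf_le h1)
    (le_csInf ⟨_, h1⟩ fun k hk => reaches_lower p n k hn hk)
end

section
/- Let 1 < p < q be coprime and let b = (b_1, ..., b_{2n}) be the gap sequence of the exponents of (t^{pq}-1)(t-1)/((t^p-1)(t^q-1)) (so b_i = a_{i-1} - a_i for the strictly decreasing exponent sequence a_0 > ... > a_{2n}). Then every b_i satisfies 1 ≤ b_i ≤ p - 1, the number of terms 2n is even, b_{2n-1} = p - 1 and b_{2n} = 1. Consequently max{ b_{2i+1} : 0 ≤ i ≤ n-1 } = p - 1. -/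
open Polynomial

private lemma aux_inner (w m b : ℕ) (v : ℤ) :
    (∑ j ∈ Finset.range w, if b + j = m then v else 0) =
      if b ≤ m ∧ m < b + w then v else 0 := by
  by_cases h : b ≤ m ∧ m < b + w
  · rw [if_pos h]
    rw [Finset.sum_eq_single_of_mem (m - b) (Finset.mem_range.2 (by omega))]
    · rw [if_pos (by omega)]
    · intro j hj hne
      simp only [Finset.mem_range] at hj
      rw [if_neg (by omega)]
  · rw [if_neg h]
    apply Finset.sum_eq_zero
    intro j hj
    simp only [Finset.mem_range] at hj
    rw [if_neg (by omega)]

private lemma aux_coeff_window (w M : ℕ) (a : ℕ → ℕ) (m : ℕ) :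
    (((∑ j ∈ Finset.range w, (X : Polynomial ℤ) ^ j) *
        ∑ i ∈ Finset.range M, (-1 : Polynomial ℤ) ^ i * X ^ (a i))).coeff m =
      ∑ i ∈ Finset.range M, (if a i ≤ m ∧ m < a i + w then (-1 : ℤ) ^ i else 0) := by
  rw [Finset.sum_mul_sum, Finset.sum_comm, Polynomial.finset_sum_coeff]
  apply Finset.sum_congr rfl
  intro i _
  rw [Polynomial.finset_sum_coeff]
  have h : ∀ j ∈ Finset.range w, ((X : Polynomial ℤ)^j * ((-1 : Polynomial ℤ)^i * X^(a i))).coeff m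
      = if a i + j = m then (-1:ℤ)^i else 0 := by
    intro j _
    have h1 : (X : Polynomial ℤ)^j * ((-1 : Polynomial ℤ)^i * X^(a i))
        = C ((-1:ℤ)^i) * X^(a i + j) := by
      rw [map_pow, map_neg, map_one, pow_add]; ring
    rw [h1, Polynomial.coeff_C_mul, Polynomial.coeff_X_pow]
    simp [mul_ite, eq_comm]
  rw [Finset.sum_congr rfl h]
  exact aux_inner w m (a i) _

private lemma aux_coeff_G (c w m : ℕ) (hc : 0 < c) :
    (∑ k ∈ Finset.range w, (X : Polynomial ℤ) ^ (k * c)).coeff m =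
      if c ∣ m ∧ m < w * c then 1 else 0 := by
  rw [Polynomial.finset_sum_coeff]
  simp only [Polynomial.coeff_X_pow]
  by_cases hd : c ∣ m
  · obtain ⟨d, rfl⟩ := hd
    have h : ∀ k ∈ Finset.range w, (if c * d = k * c then (1:ℤ) else 0) = if k = d then 1 else 0 := by
      intro k _
      congr 1
      simp only [eq_iff_iff]
      constructor
      · intro h
        have h2 : k * c = d * c := by rw [← h]; ring
        exact Nat.eq_of_mul_eq_mul_right hc h2
      · rintro rfl; ring
    rw [Finset.sum_congr rfl h, Finset.sum_ite_eq' (Finset.range w) d (fun _ => (1:ℤ))]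
    simp only [Finset.mem_range]
    have hdvd : c ∣ c * d := ⟨d, rfl⟩
    by_cases hdw : d < w
    · rw [if_pos hdw, if_pos ⟨hdvd, by
        calc c * d < c * w := Nat.mul_lt_mul_of_le_of_lt (le_refl c) hdw hc
          _ = w * c := Nat.mul_comm c w⟩]
    · rw [if_neg hdw, if_neg (by
        rintro ⟨-, hlt⟩
        have h3 : c * d < c * w := by rw [Nat.mul_comm c w]; omega
        exact hdw (Nat.lt_of_mul_lt_mul_left h3))]
  · rw [if_neg (fun h => hd h.1)]
    apply Finset.sum_eq_zero
    intro k _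
    rw [if_neg (fun h => hd ⟨k, by rw [h, Nat.mul_comm]⟩)]

private lemma aux_cancel (p q : ℕ) (hp : 0 < p) (P : Polynomial ℤ)
    (hpoly : ((X : Polynomial ℤ) ^ (p * q) - 1) * (X - 1) =
      ((X : Polynomial ℤ) ^ p - 1) * ((X : Polynomial ℤ) ^ q - 1) * P) :
    (∑ j ∈ Finset.range q, (X : Polynomial ℤ) ^ j) * P =
      ∑ k ∈ Finset.range q, (X : Polynomial ℤ) ^ (k * p) := by
  have hne : ((X : Polynomial ℤ) ^ p - 1) * ((X : Polynomial ℤ) - 1) ≠ 0 := by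
    apply mul_ne_zero
    · intro h
      have h0 : (((X : Polynomial ℤ) ^ p - 1)).coeff 0 = -1 := by
        simp [Polynomial.coeff_X_pow]; omega
      rw [h] at h0; simp at h0
    · intro h
      have h0 : (((X : Polynomial ℤ) - 1)).coeff 0 = -1 := by simp
      rw [h] at h0; simp at h0
  apply mul_right_cancel₀ hne
  have h1 : (∑ k ∈ Finset.range q, (X : Polynomial ℤ) ^ (k * p)) * ((X : Polynomial ℤ)^p - 1)
      = (X : Polynomial ℤ)^(p*q) - 1 := by
    calc (∑ k ∈ Finset.range q, (X : Polynomial ℤ) ^ (k * p)) * ((X : Polynomial ℤ)^p - 1)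
        = (∑ k ∈ Finset.range q, ((X : Polynomial ℤ)^p) ^ k) * ((X : Polynomial ℤ)^p - 1) := by
          congr 1
          apply Finset.sum_congr rfl
          intro k _
          rw [← pow_mul, Nat.mul_comm]
      _ = ((X : Polynomial ℤ)^p)^q - 1 := geom_sum_mul _ _
      _ = (X : Polynomial ℤ)^(p*q) - 1 := by rw [← pow_mul]
  have h2 : ((X : Polynomial ℤ) ^ q - 1) = (∑ j ∈ Finset.range q, (X : Polynomial ℤ) ^ j) * ((X : Polynomial ℤ) - 1) :=
    (geom_sum_mul _ _).symm
  calc (∑ j ∈ Finset.range q, (X : Polynomial ℤ) ^ j) * P * (((X : Polynomial ℤ)^p - 1) * ((X : Polynomial ℤ) - 1))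
      = ((X : Polynomial ℤ)^p - 1) * ((∑ j ∈ Finset.range q, (X : Polynomial ℤ)^j) * ((X : Polynomial ℤ) - 1)) * P := by
        ring
    _ = ((X : Polynomial ℤ)^p - 1) * ((X : Polynomial ℤ)^q - 1) * P := by rw [← h2]
    _ = ((X : Polynomial ℤ)^(p*q) - 1) * ((X : Polynomial ℤ) - 1) := hpoly.symm
    _ = (∑ k ∈ Finset.range q, (X : Polynomial ℤ) ^ (k * p)) * (((X : Polynomial ℤ)^p - 1) * ((X : Polynomial ℤ) - 1)) := by
        rw [← h1]; ring

private lemma aux_single (M i0 : ℕ) (hi0 : i0 < M) (cond : ℕ → Prop) [DecidablePred cond]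
    (hc : ∀ i, i < M → (cond i ↔ i = i0)) :
    (∑ i ∈ Finset.range M, if cond i then (-1:ℤ)^i else 0) = (-1)^i0 := by
  rw [Finset.sum_eq_single_of_mem i0 (Finset.mem_range.2 hi0)]
  · rw [if_pos ((hc i0 hi0).2 rfl)]
  · intro j hj hne
    rw [if_neg]
    intro hcj
    exact hne ((hc j (Finset.mem_range.1 hj)).1 hcj)

private lemma aux_tail (n i0 : ℕ) (hi0 : i0 ≤ 2*n) (cond : ℕ → Prop) [DecidablePred cond]
    (hc : ∀ i, i ≤ 2*n → (cond i ↔ i0 ≤ i)) :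
    (∑ i ∈ Finset.range (2*n+1), if cond i then (-1:ℤ)^i else 0)
      = if Even i0 then 1 else 0 := by
  have h1 : ∀ i ∈ Finset.range (2*n+1), (if cond i then (-1:ℤ)^i else 0)
      = if i0 ≤ i then (-1:ℤ)^i else 0 := by
    intro i hi
    simp only [Finset.mem_range] at hi
    by_cases h : cond i
    · rw [if_pos h, if_pos ((hc i (by omega)).1 h)]
    · rw [if_neg h, if_neg (fun hle => h ((hc i (by omega)).2 hle))]
  rw [Finset.sum_congr rfl h1]
  have h2 : (∑ i ∈ Finset.Ico i0 (2*n+1), (-1:ℤ)^i)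
      = (-1:ℤ)^i0 * (if Even (2*n+1-i0) then 0 else 1) := by
    rw [Finset.sum_Ico_eq_sum_range]
    calc ∑ k ∈ Finset.range (2*n+1-i0), (-1:ℤ)^(i0+k)
        = ∑ k ∈ Finset.range (2*n+1-i0), (-1:ℤ)^i0 * (-1)^k := by
          apply Finset.sum_congr rfl; intro k _; rw [pow_add]
      _ = (-1:ℤ)^i0 * ∑ k ∈ Finset.range (2*n+1-i0), (-1:ℤ)^k := by rw [Finset.mul_sum]
      _ = _ := by rw [neg_one_geom_sum]
  rw [Finset.range_eq_Ico, ← Finset.sum_Ico_consecutive _ (Nat.zero_le i0) (show i0 ≤ 2*n+1 by omega)]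
  have h3 : ∑ i ∈ Finset.Ico 0 i0, (if i0 ≤ i then (-1:ℤ)^i else 0) = 0 := by
    apply Finset.sum_eq_zero; intro i hi; simp only [Finset.mem_Ico] at hi; rw [if_neg (by omega)]
  have h4 : ∑ i ∈ Finset.Ico i0 (2*n+1), (if i0 ≤ i then (-1:ℤ)^i else 0)
      = ∑ i ∈ Finset.Ico i0 (2*n+1), (-1:ℤ)^i := by
    apply Finset.sum_congr rfl; intro i hi; simp only [Finset.mem_Ico] at hi; rw [if_pos hi.1]
  rw [h3, h4, h2, zero_add]
  rcases Nat.even_or_odd i0 with he | ho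
  · have hodd : ¬ Even (2*n+1-i0) := by
      rw [Nat.even_iff] at he ⊢; omega
    rw [if_neg hodd, if_pos he, Even.neg_one_pow he, mul_one]
  · have hev : Even (2*n+1-i0) := by
      rw [Nat.odd_iff] at ho; rw [Nat.even_iff]; omega
    have hne : ¬ Even i0 := by rw [Nat.even_iff]; rw [Nat.odd_iff] at ho; omega
    rw [if_pos hev, if_neg hne, mul_zero]

theorem torus_gap_bounds (p q n : ℕ) (hp : 1 < p) (hpq : p < q) (hco : Nat.Coprime p q)
    (a : ℕ → ℕ)
    (hdec : ∀ i j, i < j → j ≤ 2 * n → a j < a i)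
    (h0 : a 0 = (p - 1) * (q - 1)) (hlast : a (2 * n) = 0)
    (hpoly : ((X : Polynomial ℤ) ^ (p * q) - 1) * (X - 1) =
      ((X : Polynomial ℤ) ^ p - 1) * ((X : Polynomial ℤ) ^ q - 1) *
        ∑ i ∈ Finset.range (2 * n + 1), (-1 : Polynomial ℤ) ^ i * X ^ (a i)) :
    1 ≤ n ∧
    (∀ i, 1 ≤ i → i ≤ 2 * n → 1 ≤ a (i - 1) - a i ∧ a (i - 1) - a i ≤ p - 1) ∧
    a (2 * n - 2) - a (2 * n - 1) = p - 1 ∧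
    a (2 * n - 1) - a (2 * n) = 1 ∧
    (Finset.range n).sup (fun i => a (2 * i) - a (2 * i + 1)) = p - 1 := by
  -- n is positive
  have hn : 1 ≤ n := by
    by_contra h
    have hn0 : n = 0 := by omega
    rw [hn0] at hlast
    simp only [Nat.mul_zero] at hlast
    have h1 : 0 < (p - 1) * (q - 1) :=
      Nat.mul_pos (by omega) (by omega)
    omega
  -- monotonicity
  have amono : ∀ i j, i ≤ j → j ≤ 2 * n → a j ≤ a i := by
    intro i j hij hj
    rcases Nat.lt_or_ge i j with h | h
    · exact (hdec i j h hj).le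
    · have : i = j := by omega
      rw [this]
  -- the two window identities
  have Hq : ∀ m, (∑ i ∈ Finset.range (2*n+1), if a i ≤ m ∧ m < a i + q then (-1:ℤ)^i else 0)
      = if p ∣ m ∧ m < q * p then 1 else 0 := by
    intro m
    have hc := aux_cancel p q (by omega) _ hpoly
    have hb := aux_coeff_window q (2*n+1) a m
    rw [hc] at hb
    rw [← hb]
    exact aux_coeff_G p q m (by omega)
  have hpoly2 : ((X : Polynomial ℤ) ^ (q * p) - 1) * (X - 1) =
      ((X : Polynomial ℤ) ^ q - 1) * ((X : Polynomial ℤ) ^ p - 1) *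
        ∑ i ∈ Finset.range (2 * n + 1), (-1 : Polynomial ℤ) ^ i * X ^ (a i) := by
    rw [Nat.mul_comm q p]
    linear_combination hpoly
  have Hp : ∀ m, (∑ i ∈ Finset.range (2*n+1), if a i ≤ m ∧ m < a i + p then (-1:ℤ)^i else 0)
      = if q ∣ m ∧ m < p * q then 1 else 0 := by
    intro m
    have hc := aux_cancel q p (by omega) _ hpoly2
    have hb := aux_coeff_window p (2*n+1) a m
    rw [hc] at hb
    rw [← hb]
    exact aux_coeff_G q p m (by omega)
  -- gap upper bounds
  have gap : ∀ i, 1 ≤ i → i ≤ 2 * n → a (i - 1) - a i ≤ p - 1 := by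
    intro i h1 h2
    by_contra hcon
    have hlt := hdec (i-1) i (by omega) h2
    have hgap : a i + p ≤ a (i - 1) := by omega
    rcases Nat.even_or_odd i with he | ho
    · -- use singleton window at top a (i-1), index i-1 odd
      have ho' : Odd (i-1) := Nat.odd_iff.2 (by rw [Nat.even_iff] at he; omega)
      have hs := aux_single (2*n+1) (i-1) (by omega)
        (fun j => a j ≤ a (i-1) ∧ a (i-1) < a j + p) (by
          intro j hj
          constructor
          · rintro ⟨hj1, hj2⟩
            by_contra hne
            rcases Nat.lt_or_ge j i with hlt2 | hge
            · have := hdec j (i-1) (by omega) (by omega)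
              omega
            · have := amono i j hge (by omega)
              omega
          · rintro rfl
            exact ⟨le_rfl, by omega⟩)
      have hfin := hs.symm.trans (Hp (a (i-1)))
      rw [Odd.neg_one_pow ho'] at hfin
      split_ifs at hfin <;> norm_num at hfin
    · -- use singleton window at bottom a i, index i odd
      have hs := aux_single (2*n+1) i (by omega)
        (fun j => a j ≤ a i + p - 1 ∧ a i + p - 1 < a j + p) (by
          intro j hj
          constructor
          · rintro ⟨hj1, hj2⟩
            by_contra hne
            rcases Nat.lt_or_ge j i with hlt2 | hge
            · have := amono j (i-1) (by omega) (by omega)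
              omega
            · have := hdec i j (by omega) (by omega)
              omega
          · rintro rfl
            exact ⟨by omega, by omega⟩)
      have hfin := hs.symm.trans (Hp (a i + p - 1))
      rw [Odd.neg_one_pow ho] at hfin
      split_ifs at hfin <;> norm_num at hfin
  -- a (2n-1) = 1
  have ha1 : a (2*n - 1) = 1 := by
    by_contra hne
    have hpos := hdec (2*n-1) (2*n) (by omega) le_rfl
    have h2 : 2 ≤ a (2*n-1) := by omega
    have hs := aux_tail n (2*n) le_rfl (fun i => a i ≤ 1 ∧ 1 < a i + q) (by
      intro i hi
      constructor
      · rintro ⟨hia, -⟩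
        by_contra hltc
        have := amono i (2*n-1) (by omega) (by omega)
        omega
      · intro hge
        have hieq : i = 2*n := by omega
        subst hieq
        exact ⟨by omega, by omega⟩)
    have hfin := hs.symm.trans (Hq 1)
    rw [if_pos (even_two_mul n)] at hfin
    split_ifs at hfin with hh
    · have := Nat.le_of_dvd one_pos hh.1
      omega
    · norm_num at hfin
  -- a (2n-2) = p
  have ha2 : a (2*n - 2) = p := by
    have hb2 : 2 ≤ a (2*n - 2) := by
      have := hdec (2*n-2) (2*n-1) (by omega) (by omega)
      omega
    by_contra hne
    rcases Nat.lt_or_ge (a (2*n-2)) p with hltp | hgep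
    · -- a(2n-2) < p : tail window at m = a(2n-2)
      have hs := aux_tail n (2*n-2) (by omega)
        (fun i => a i ≤ a (2*n-2) ∧ a (2*n-2) < a i + q) (by
          intro i hi
          constructor
          · rintro ⟨hia, -⟩
            by_contra hltc
            have := hdec i (2*n-2) (by omega) (by omega)
            omega
          · intro hge
            have h1 := amono (2*n-2) i hge (by omega)
            exact ⟨h1, by omega⟩)
      have hfin := hs.symm.trans (Hq (a (2*n-2)))
      have hev : Even (2*n-2) := by rw [Nat.even_iff]; omega
      rw [if_pos hev] at hfin
      split_ifs at hfin with hh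
      · have := Nat.le_of_dvd (by omega) hh.1
        omega
      · norm_num at hfin
    · -- a(2n-2) > p : tail window at m = p, i0 = 2n-1
      have hgt : p < a (2*n - 2) := by omega
      have hs := aux_tail n (2*n-1) (by omega)
        (fun i => a i ≤ p ∧ p < a i + q) (by
          intro i hi
          constructor
          · rintro ⟨hia, -⟩
            by_contra hltc
            have := amono i (2*n-2) (by omega) (by omega)
            omega
          · intro hge
            have h1 := amono (2*n-1) i hge (by omega)
            exact ⟨by omega, by omega⟩)
      have hfin := hs.symm.trans (Hq p)
      have hodd : ¬ Even (2*n-1) := by rw [Nat.even_iff]; omega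
      have hqp : p < q * p := by
        have : 2*p ≤ q*p := Nat.mul_le_mul_right p (by omega)
        omega
      rw [if_neg hodd, if_pos ⟨dvd_refl p, hqp⟩] at hfin
      norm_num at hfin
  refine ⟨hn, ?_, by omega, by omega, ?_⟩
  · intro i h1 h2
    have := hdec (i-1) i (by omega) h2
    exact ⟨by omega, gap i h1 h2⟩
  · apply le_antisymm
    · apply Finset.sup_le
      intro i hi
      simp only [Finset.mem_range] at hi
      have h := gap (2*i+1) (by omega) (by omega)
      have e : 2*i+1-1 = 2*i := by omega
      rw [e] at h
      exact h
    · have hmem : n - 1 ∈ Finset.range n := Finset.mem_range.2 (by omega)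
      have hle := Finset.le_sup (f := fun i => a (2 * i) - a (2 * i + 1)) hmem
      have e1 : 2*(n-1) = 2*n-2 := by omega
      have e2 : 2*(n-1)+1 = 2*n-1 := by omega
      have e3 : 2*n-2+1 = 2*n-1 := by omega
      simp only [e1, e2, e3] at hle
      omega
end
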